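/- arXiv:1404.6826 — 3 statements merged into one kernel-verified Lean document; each statement's English description precedes it below -/
import Mathlib

section
/- There is no smooth function λ : ℂ × ℝ → ℝ such that λ(z,u) > 0 for all (z,u) and λ(z,u)·Δ_zλ(z,u) − 2|∇_zλ(z,u)|² > 0 for all (z,u) ∈ ℂ × ℝ, where Δ_z and ∇_z denote the Laplacian and gradient with respect to the two real coordinates of z = x + iy (the variable u being held fixed). (In Wirtinger derivatives this condition reads λ·λ_{z z̄} − 2|λ_z|² > 0; its unsolvability expresses that the real hyperplane {Im w = 0} in ℂ² is not transversally 1-complete.) -/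
open Filter Topology Metric Complex

section Aux

variable {l : ℂ × ℝ → ℝ}

lemma second_test {g g' : ℝ → ℝ} {c : ℝ}
    (h1 : ∀ᶠ t in 𝓝 (0:ℝ), HasDerivAt g (g' t) t)
    (h2 : HasDerivAt g' c 0)
    (hmin : IsLocalMin g 0) : 0 ≤ c := by
  by_contra hc
  push_neg at hc
  have hg'0 : g' 0 = 0 := hmin.hasDerivAt_eq_zero h1.self_of_nhds
  have hslope : Tendsto (slope g' 0) (𝓝[≠] (0:ℝ)) (𝓝 c) :=
    hasDerivAt_iff_tendsto_slope.1 h2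
  have hev : ∀ᶠ t in 𝓝[≠] (0:ℝ), slope g' 0 t < 0 :=
    hslope.eventually_lt_const hc
  have hev' : ∀ᶠ t in 𝓝 (0:ℝ), t ∈ ({0}ᶜ : Set ℝ) → slope g' 0 t < 0 :=
    eventually_nhdsWithin_iff.1 hev
  have hminev : ∀ᶠ t in 𝓝 (0:ℝ), g 0 ≤ g t := hmin
  obtain ⟨δ, hδpos, hδ⟩ := Metric.eventually_nhds_iff.1 (hev'.and (h1.and hminev))
  set d := δ/2 with hd
  have hdpos : 0 < d := by positivity
  have hdmem : ∀ t ∈ Set.Icc (0:ℝ) d, dist t 0 < δ := by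
    intro t ht
    rw [Real.dist_eq, sub_zero, _root_.abs_of_nonneg ht.1]
    linarith [ht.2]
  have hanti : StrictAntiOn g (Set.Icc 0 d) := by
    apply strictAntiOn_of_deriv_neg (convex_Icc 0 d)
    · intro t ht
      exact ((hδ (hdmem t ht)).2.1).continuousAt.continuousWithinAt
    · intro t ht
      rw [interior_Icc] at ht
      have h := hδ (hdmem t ⟨le_of_lt ht.1, le_of_lt ht.2⟩)
      rw [(h.2.1).deriv]
      have hs := h.1 (by simpa using ne_of_gt ht.1)
      rw [slope_def_field, div_eq_mul_inv] at hs
      have hgt : g' t / t < 0 := by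
        simpa [hg'0, div_eq_mul_inv] using hs
      rcases div_neg_iff.1 hgt with ⟨h1', h2'⟩ | ⟨h1', h2'⟩
      · linarith [ht.1]
      · exact h1'
  have h0d : g d < g 0 := hanti (by simp [le_of_lt hdpos]) (by simp [le_of_lt hdpos]) hdpos
  have := (hδ (hdmem d (by simp [le_of_lt hdpos]))).2.2
  linarith

lemma lineD1 (hl : ContDiff ℝ (⊤ : ℕ∞) l) (p w : ℂ × ℝ) (t : ℝ) :
    HasDerivAt (fun s : ℝ => l (p + s • w)) (fderiv ℝ l (p + t • w) w) t := by
  have hline : HasDerivAt (fun s : ℝ => p + s • w) w t := by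
    simpa using ((hasDerivAt_id t).smul_const w).const_add p
  exact ((hl.differentiable (by simp) (p + t • w)).hasFDerivAt).comp_hasDerivAt t hline

lemma lineD2 (hl : ContDiff ℝ (⊤ : ℕ∞) l) (p w : ℂ × ℝ) (t : ℝ) :
    HasDerivAt (fun s : ℝ => fderiv ℝ l (p + s • w) w)
      (iteratedFDeriv ℝ 2 l (p + t • w) ![w, w]) t := by
  have hline : HasDerivAt (fun s : ℝ => p + s • w) w t := by
    simpa using ((hasDerivAt_id t).smul_const w).const_add p
  have hd : ContDiff ℝ (⊤ : ℕ∞) (fderiv ℝ l) := hl.fderiv_right (by simp)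
  have hf : HasFDerivAt (fderiv ℝ l) (fderiv ℝ (fderiv ℝ l) (p + t • w)) (p + t • w) :=
    (hd.differentiable (by simp) (p + t • w)).hasFDerivAt
  have happ := ((ContinuousLinearMap.apply ℝ ℝ w).hasFDerivAt.comp _ hf).comp_hasDerivAt t hline
  have heq : iteratedFDeriv ℝ 2 l (p + t • w) ![w, w]
      = fderiv ℝ (fderiv ℝ l) (p + t • w) w w := by
    rw [iteratedFDeriv_two_apply]; rfl
  rw [heq]
  exact happ

lemma emb (z v : ℂ) (s : ℝ) :
    ((z + s • v : ℂ), (0:ℝ)) = ((z, (0:ℝ)) : ℂ × ℝ) + s • ((v, (0:ℝ)) : ℂ × ℝ) := by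
  simp [Prod.ext_iff]

lemma hD1 (hl : ContDiff ℝ (⊤ : ℕ∞) l) (hpos : ∀ p, 0 < l p) (z v : ℂ) (t : ℝ) :
    HasDerivAt (fun s : ℝ => (l (z + s • v, 0))⁻¹)
      (-(fderiv ℝ l ((z,(0:ℝ)) + t • ((v,(0:ℝ)) : ℂ × ℝ)) (v, 0)) /
        (l ((z,(0:ℝ)) + t • ((v,(0:ℝ)) : ℂ × ℝ)))^2) t := by
  have h1 := (lineD1 hl (z,(0:ℝ)) (v,(0:ℝ)) t).inv (ne_of_gt (hpos _))
  simp only [emb]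
  exact h1

lemma hD2 (hl : ContDiff ℝ (⊤ : ℕ∞) l) (hpos : ∀ p, 0 < l p) (z v : ℂ) :
    HasDerivAt (fun t : ℝ => -(fderiv ℝ l ((z,(0:ℝ)) + t • ((v,(0:ℝ)) : ℂ × ℝ)) (v, 0)) /
        (l ((z,(0:ℝ)) + t • ((v,(0:ℝ)) : ℂ × ℝ)))^2)
      ((2 * (fderiv ℝ l (z,0) (v,0))^2
          - iteratedFDeriv ℝ 2 l (z,0) ![(v,0),(v,0)] * l (z,0)) / (l (z,0))^3) 0 := by
  have hnum := (lineD2 hl (z,(0:ℝ)) (v,(0:ℝ)) 0).neg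
  have hF := lineD1 hl (z,(0:ℝ)) (v,(0:ℝ)) 0
  have hden := hF.pow 2
  have hd := hnum.div hden (pow_ne_zero _ (ne_of_gt (hpos _)))
  simp only [zero_smul, add_zero] at hd ⊢
  refine hd.congr_deriv ?_
  have hF0 : l ((z:ℂ), (0:ℝ)) ≠ 0 := ne_of_gt (hpos _)
  simp only [Pi.pow_apply, Pi.neg_apply, zero_smul, add_zero]
  field_simp
  ring

lemma nD1 (z v : ℂ) (t : ℝ) :
    HasDerivAt (fun s : ℝ => Complex.normSq (z + s • v))
      (2*(z.re + t*v.re)*v.re + 2*(z.im + t*v.im)*v.im) t := by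
  have hre : HasDerivAt (fun s : ℝ => z.re + s*v.re) v.re t := by
    simpa using ((hasDerivAt_id t).mul_const v.re).const_add z.re
  have him : HasDerivAt (fun s : ℝ => z.im + s*v.im) v.im t := by
    simpa using ((hasDerivAt_id t).mul_const v.im).const_add z.im
  have h := (hre.pow 2).add (him.pow 2)
  have hfun : (fun s : ℝ => Complex.normSq (z + s • v))
      = fun s => (z.re + s*v.re)^2 + (z.im + s*v.im)^2 := by
    funext s
    simp [Complex.normSq_apply, Complex.add_re, Complex.add_im, Complex.real_smul,
      Complex.mul_re, Complex.mul_im]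
    ring
  rw [hfun]
  refine h.congr_deriv ?_
  push_cast
  ring

lemma nD2 (z v : ℂ) :
    HasDerivAt (fun t : ℝ => 2*(z.re + t*v.re)*v.re + 2*(z.im + t*v.im)*v.im)
      (2*v.re*v.re + 2*v.im*v.im) 0 := by
  have hre : HasDerivAt (fun s : ℝ => z.re + s*v.re) v.re 0 := by
    simpa using ((hasDerivAt_id (0:ℝ)).mul_const v.re).const_add z.re
  have him : HasDerivAt (fun s : ℝ => z.im + s*v.im) v.im 0 := by
    simpa using ((hasDerivAt_id (0:ℝ)).mul_const v.im).const_add z.im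
  have h := (((hre.const_mul 2).mul_const v.re)).add ((him.const_mul 2).mul_const v.im)
  exact h

/-- The "Laplacian" of `h = (l (·,0))⁻¹` is negative. -/
lemma lap_neg (hpos : ∀ p, 0 < l p)
    (hineq : ∀ p, 0 <
          l p *
            (iteratedFDeriv ℝ 2 l p ![((1 : ℂ), (0 : ℝ)), ((1 : ℂ), (0 : ℝ))] +
             iteratedFDeriv ℝ 2 l p ![(Complex.I, (0 : ℝ)), (Complex.I, (0 : ℝ))]) -
          2 * ((fderiv ℝ l p ((1 : ℂ), (0 : ℝ)))^2 +
               (fderiv ℝ l p (Complex.I, (0 : ℝ)))^2)) (z : ℂ) :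
    (2 * (fderiv ℝ l (z,0) ((1:ℂ),0))^2
        - iteratedFDeriv ℝ 2 l (z,0) ![((1:ℂ),0),((1:ℂ),0)] * l (z,0)) / (l (z,0))^3
    + (2 * (fderiv ℝ l (z,0) (I,0))^2
        - iteratedFDeriv ℝ 2 l (z,0) ![(I,0),(I,0)] * l (z,0)) / (l (z,0))^3 < 0 := by
  have h := hineq (z,0)
  have hL := hpos (z,0)
  rw [← add_div]
  apply div_neg_of_neg_of_pos
  · nlinarith [h]
  · positivity

lemma noLocalMinH (hl : ContDiff ℝ (⊤ : ℕ∞) l) (hpos : ∀ p, 0 < l p)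
    (hineq : ∀ p, 0 <
          l p *
            (iteratedFDeriv ℝ 2 l p ![((1 : ℂ), (0 : ℝ)), ((1 : ℂ), (0 : ℝ))] +
             iteratedFDeriv ℝ 2 l p ![(Complex.I, (0 : ℝ)), (Complex.I, (0 : ℝ))]) -
          2 * ((fderiv ℝ l p ((1 : ℂ), (0 : ℝ)))^2 +
               (fderiv ℝ l p (Complex.I, (0 : ℝ)))^2)) (q : ℂ) :
    ¬ IsLocalMin (fun z : ℂ => (l (z, 0))⁻¹) q := by
  intro hq
  have key : ∀ v : ℂ, 0 ≤ (2 * (fderiv ℝ l (q,0) (v,0))^2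
      - iteratedFDeriv ℝ 2 l (q,0) ![(v,0),(v,0)] * l (q,0)) / (l (q,0))^3 := by
    intro v
    have hc : Continuous fun s : ℝ => q + s • v := by continuity
    have h0 : q + (0:ℝ) • v = q := by simp
    have hm : IsLocalMin ((fun z : ℂ => (l (z, 0))⁻¹) ∘ (fun s : ℝ => q + s • v)) 0 :=
      IsLocalMin.comp_continuous (by rwa [h0]) hc.continuousAt
    exact second_test (Eventually.of_forall (hD1 hl hpos q v)) (hD2 hl hpos q v) hm
  have h1 := key 1
  have h2 := key I
  have := lap_neg hpos hineq q
  linarith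

lemma noLocalMinS (hl : ContDiff ℝ (⊤ : ℕ∞) l) (hpos : ∀ p, 0 < l p)
    (hineq : ∀ p, 0 <
          l p *
            (iteratedFDeriv ℝ 2 l p ![((1 : ℂ), (0 : ℝ)), ((1 : ℂ), (0 : ℝ))] +
             iteratedFDeriv ℝ 2 l p ![(Complex.I, (0 : ℝ)), (Complex.I, (0 : ℝ))]) -
          2 * ((fderiv ℝ l p ((1 : ℂ), (0 : ℝ)))^2 +
               (fderiv ℝ l p (Complex.I, (0 : ℝ)))^2))
    (κ : ℝ) (q : ℂ) (hq0 : q ≠ 0) :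
    ¬ IsLocalMin (fun z : ℂ => (l (z, 0))⁻¹ + κ * Real.log (Complex.normSq z)) q := by
  intro hq
  have key : ∀ v : ℂ, 0 ≤ (2 * (fderiv ℝ l (q,0) (v,0))^2
      - iteratedFDeriv ℝ 2 l (q,0) ![(v,0),(v,0)] * l (q,0)) / (l (q,0))^3
      + κ * (((2*v.re*v.re + 2*v.im*v.im) * Complex.normSq (q + (0:ℝ) • v)
          - (2*(q.re + 0*v.re)*v.re + 2*(q.im + 0*v.im)*v.im)
            * (2*(q.re + 0*v.re)*v.re + 2*(q.im + 0*v.im)*v.im))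
        / (Complex.normSq (q + (0:ℝ) • v))^2) := by
    intro v
    have hc : Continuous fun s : ℝ => q + s • v := by continuity
    have h0 : q + (0:ℝ) • v = q := by simp
    have hm : IsLocalMin ((fun z : ℂ => (l (z, 0))⁻¹ + κ * Real.log (Complex.normSq z))
        ∘ (fun s : ℝ => q + s • v)) 0 :=
      IsLocalMin.comp_continuous (by rwa [h0]) hc.continuousAt
    have hne : ∀ᶠ t in 𝓝 (0:ℝ), q + t • v ≠ 0 := by
      have := hc.continuousAt (x := (0:ℝ))
      exact this.eventually_ne (by simpa [h0] using hq0)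
    have hn0 : Complex.normSq (q + (0:ℝ) • v) ≠ 0 := by
      simpa [h0] using (mt Complex.normSq_eq_zero.mp hq0)
    have h1 : ∀ᶠ t in 𝓝 (0:ℝ), HasDerivAt
        (fun s : ℝ => (l (q + s • v, 0))⁻¹ + κ * Real.log (Complex.normSq (q + s • v)))
        (-(fderiv ℝ l ((q,(0:ℝ)) + t • ((v,(0:ℝ)) : ℂ × ℝ)) (v, 0)) /
            (l ((q,(0:ℝ)) + t • ((v,(0:ℝ)) : ℂ × ℝ)))^2
          + κ * ((2*(q.re + t*v.re)*v.re + 2*(q.im + t*v.im)*v.im)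
              / Complex.normSq (q + t • v))) t := by
      filter_upwards [hne] with t ht
      exact (hD1 hl hpos q v t).add
        (((nD1 q v t).log (mt Complex.normSq_eq_zero.mp ht)).const_mul κ)
    have h2 := (hD2 hl hpos q v).add
      (((nD2 q v).div (nD1 q v 0) hn0).const_mul κ)
    exact second_test h1 h2 hm
  have h1 := key 1
  have hI := key I
  have hlap := lap_neg hpos hineq q
  have hns : Complex.normSq q ≠ 0 := mt Complex.normSq_eq_zero.mp hq0
  have hval : Complex.normSq q = q.re * q.re + q.im * q.im := Complex.normSq_apply q
  simp only [zero_smul, add_zero, Complex.one_re, Complex.one_im, Complex.I_re, Complex.I_im,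
    mul_zero, zero_mul, mul_one, add_zero, zero_add] at h1 hI
  have hnum : (2 * Complex.normSq q - 2*q.re*(2*q.re))
      + (2 * Complex.normSq q - 2*q.im*(2*q.im)) = 0 := by
    rw [hval]; ring
  have hzero : κ * ((2 * Complex.normSq q - 2*q.re*(2*q.re)) / (Complex.normSq q)^2)
      + κ * ((2 * Complex.normSq q - 2*q.im*(2*q.im)) / (Complex.normSq q)^2) = 0 := by
    have hcomb : κ * ((2 * Complex.normSq q - 2*q.re*(2*q.re)) / (Complex.normSq q)^2)
        + κ * ((2 * Complex.normSq q - 2*q.im*(2*q.im)) / (Complex.normSq q)^2)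
        = κ * (((2 * Complex.normSq q - 2*q.re*(2*q.re))
            + (2 * Complex.normSq q - 2*q.im*(2*q.im))) / (Complex.normSq q)^2) := by
      ring
    rw [hcomb, hnum]
    simp
  linarith

end Aux

/-- There is no smooth positive function `λ : ℂ × ℝ → ℝ` with
`λ·Δ_zλ − 2|∇_zλ|² > 0` everywhere: the real hyperplane `{Im w = 0}` in `ℂ²`
is not transversally 1-complete. -/
theorem no_transversal_one_completeness_of_hyperplane :
    ¬ ∃ l : ℂ × ℝ → ℝ,
        ContDiff ℝ (⊤ : ℕ∞) l ∧
        (∀ p, 0 < l p) ∧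
        (∀ p, 0 <
          l p *
            (iteratedFDeriv ℝ 2 l p ![((1 : ℂ), (0 : ℝ)), ((1 : ℂ), (0 : ℝ))] +
             iteratedFDeriv ℝ 2 l p ![(Complex.I, (0 : ℝ)), (Complex.I, (0 : ℝ))]) -
          2 * ((fderiv ℝ l p ((1 : ℂ), (0 : ℝ)))^2 +
               (fderiv ℝ l p (Complex.I, (0 : ℝ)))^2)) := by
  rintro ⟨l, hl, hpos, hineq⟩
  have hcont : Continuous (fun z : ℂ => (l (z, 0))⁻¹) :=
    Continuous.inv₀ (hl.continuous.comp (continuous_id.prodMk continuous_const))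
      (fun z => ne_of_gt (hpos _))
  have hposh : ∀ z : ℂ, 0 < (l (z, 0))⁻¹ := fun z => inv_pos.2 (hpos _)
  -- minimum on the unit sphere
  obtain ⟨ζ, hζS, hζmin⟩ := (isCompact_sphere (0:ℂ) 1).exists_isMinOn
    ⟨1, by simp⟩ hcont.continuousOn
  set A := (l (ζ, 0))⁻¹ with hAdef
  have hA : 0 < A := hposh ζ
  have hζmin' : ∀ w : ℂ, ‖w‖ = 1 → A ≤ (l (w, 0))⁻¹ := by
    intro w hw
    exact hζmin (by simpa [Metric.mem_sphere, dist_eq_norm] using hw)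
  -- step 1 : the closed unit disk
  have hdisk : ∀ z : ℂ, ‖z‖ ≤ 1 → A ≤ (l (z, 0))⁻¹ := by
    obtain ⟨q, hqB, hqmin⟩ := (isCompact_closedBall (0:ℂ) 1).exists_isMinOn
      ⟨0, by simp⟩ hcont.continuousOn
    have hq1 : ‖q‖ ≤ 1 := by simpa [Metric.mem_closedBall, dist_eq_norm] using hqB
    rcases lt_or_eq_of_le hq1 with hlt | heq
    · exfalso
      apply noLocalMinH hl hpos hineq q
      have hball : Metric.ball (0:ℂ) 1 ∈ 𝓝 q :=
        Metric.isOpen_ball.mem_nhds (by simpa [Metric.mem_ball, dist_eq_norm] using hlt)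
      exact Filter.eventually_of_mem hball
        (fun z hz => hqmin (Metric.ball_subset_closedBall hz))
    · intro z hz
      have h1 : A ≤ (l (q, 0))⁻¹ := hζmin' q heq
      have h2 := hqmin (by simpa [Metric.mem_closedBall, dist_eq_norm] using hz)
      exact le_trans h1 h2
  -- step 2 : annulus estimate
  have hann : ∀ R : ℝ, 1 < R → ∀ z : ℂ, 1 ≤ ‖z‖ → ‖z‖ ≤ R →
      A ≤ (l (z, 0))⁻¹ + (A / Real.log (R^2)) * Real.log (Complex.normSq z) := by
    intro R hR z hz1 hzR
    have hlogR : 0 < Real.log (R^2) := Real.log_pos (by nlinarith)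
    set κ := A / Real.log (R^2) with hκdef
    set K := Metric.closedBall (0:ℂ) R ∩ (Metric.ball (0:ℂ) 1)ᶜ with hKdef
    have hKc : IsCompact K :=
      (isCompact_closedBall _ _).inter_right Metric.isOpen_ball.isClosed_compl
    have hzK : z ∈ K := by
      constructor
      · simpa [Metric.mem_closedBall, dist_eq_norm] using hzR
      · simp only [Set.mem_compl_iff, Metric.mem_ball, dist_eq_norm, not_lt]
        simpa using hz1
    have hKne : ∀ w ∈ K, w ≠ 0 := by
      intro w hw h0
      have := hw.2
      simp [h0, Metric.mem_ball] at this
    have hcontK : ContinuousOn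
        (fun z : ℂ => (l (z, 0))⁻¹ + κ * Real.log (Complex.normSq z)) K := by
      apply hcont.continuousOn.add
      apply ContinuousOn.mul continuousOn_const
      apply Real.continuousOn_log.comp Complex.continuous_normSq.continuousOn
      intro w hw
      simpa using mt Complex.normSq_eq_zero.mp (hKne w hw)
    obtain ⟨q, hqK, hqmin⟩ := hKc.exists_isMinOn ⟨z, hzK⟩ hcontK
    have hq1 : 1 ≤ ‖q‖ := by
      have := hqK.2
      simpa [Metric.mem_ball, dist_eq_norm, not_lt] using this
    have hqR : ‖q‖ ≤ R := by simpa [Metric.mem_closedBall, dist_eq_norm] using hqK.1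
    have hnormSq : ∀ w : ℂ, Complex.normSq w = ‖w‖^2 := by
      intro w
      rw [Complex.sq_norm]
    have hsq : A ≤ (l (q, 0))⁻¹ + κ * Real.log (Complex.normSq q) := by
      by_cases hb1 : ‖q‖ = 1
      · have : Complex.normSq q = 1 := by rw [hnormSq, hb1]; norm_num
        rw [this]
        simpa using hζmin' q hb1
      · by_cases hbR : ‖q‖ = R
        · have : Complex.normSq q = R^2 := by rw [hnormSq, hbR]
          rw [this, hκdef]
          have : A / Real.log (R^2) * Real.log (R^2) = A := by
            have hlogRne : Real.log (R^2) ≠ 0 := ne_of_gt hlogR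
            exact div_mul_cancel₀ A hlogRne
          rw [this]
          have := hposh q
          linarith
        · exfalso
          apply noLocalMinS hl hpos hineq κ q (hKne q hqK)
          have hU : (Metric.ball (0:ℂ) R ∩ (Metric.closedBall (0:ℂ) 1)ᶜ) ∈ 𝓝 q := by
            apply IsOpen.mem_nhds
            · exact Metric.isOpen_ball.inter Metric.isClosed_closedBall.isOpen_compl
            · constructor
              · simp only [Metric.mem_ball, dist_eq_norm, sub_zero]
                exact lt_of_le_of_ne hqR hbR
              · simp only [Set.mem_compl_iff, Metric.mem_closedBall, dist_eq_norm, sub_zero, not_le]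
                exact lt_of_le_of_ne hq1 (fun h => hb1 h.symm)
          apply Filter.eventually_of_mem hU
          intro w hw
          exact hqmin ⟨Metric.ball_subset_closedBall hw.1,
            fun hc => hw.2 (Metric.ball_subset_closedBall hc)⟩
    exact le_trans hsq (hqmin hzK)
  -- step 3 : outside the disk
  have hout : ∀ z : ℂ, 1 ≤ ‖z‖ → A ≤ (l (z, 0))⁻¹ := by
    intro z hz
    by_contra hlt
    push_neg at hlt
    set ε := A - (l (z, 0))⁻¹ with hεdef
    have hε : 0 < ε := by simp [hεdef]; linarith
    set lz := Real.log (Complex.normSq z) with hlzdef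
    have hlz : 0 ≤ lz := by
      apply Real.log_nonneg
      have h1 : (1:ℝ) ≤ ‖z‖^2 := by nlinarith
      have h2 : Complex.normSq z = ‖z‖^2 := by rw [Complex.sq_norm]
      rw [h2]
      exact h1
    set R := max (‖z‖ + 1) (Real.exp (A * lz / (2*ε) + 1)) with hRdef
    have hR1 : 1 < R := lt_of_lt_of_le (by linarith) (le_max_left _ _)
    have hzR : ‖z‖ ≤ R := le_trans (by linarith) (le_max_left _ _)
    have hannz := hann R hR1 z hz hzR
    have hlogR : Real.log (R^2) = 2 * Real.log R := by
      rw [sq]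
      rw [Real.log_mul (by positivity) (by positivity)]
      ring
    have hlogRge : A * lz / (2*ε) + 1 ≤ Real.log R := by
      calc A * lz / (2*ε) + 1 = Real.log (Real.exp (A * lz / (2*ε) + 1)) := (Real.log_exp _).symm
        _ ≤ Real.log R := Real.log_le_log (Real.exp_pos _) (le_max_right _ _)
    have hlogRpos : 0 < Real.log R := Real.log_pos hR1
    have hbound : (A / Real.log (R^2)) * lz < ε := by
      rw [hlogR]
      rw [div_mul_eq_mul_div, div_lt_iff₀ (by positivity)]
      have h2 : 2 * ε * (A * lz / (2*ε)) = A * lz := by field_simp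
      have key : A * lz + 2*ε ≤ 2*ε*Real.log R := by
        have hmul := mul_le_mul_of_nonneg_left hlogRge (le_of_lt (mul_pos two_pos hε))
        calc A*lz + 2*ε = 2*ε*(A*lz/(2*ε)) + 2*ε := by rw [h2]
          _ = 2*ε*(A*lz/(2*ε)+1) := by ring
          _ ≤ 2*ε*Real.log R := hmul
      nlinarith [key, hε]
    linarith
  -- conclusion: ζ is a global minimum
  apply noLocalMinH hl hpos hineq ζ
  apply Filter.Eventually.of_forall
  intro z
  rcases le_total ‖z‖ 1 with hle | hge
  · exact hdisk z hle
  · exact hout z hge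
end

section
/- Let n ≥ 1, a ∈ ℂⁿ, b > 0, and define λ(z) = (b² − ‖z − a‖²)⁻¹ on the open ball B = {z ∈ ℂⁿ : ‖z − a‖ < b}. Then λ is smooth on B and for every z ∈ B and every nonzero w ∈ ℂⁿ, λ(z)·(D²λ(z)(w,w) + D²λ(z)(iw,iw)) − 2·((Dλ(z)w)² + (Dλ(z)(iw))²) > 0, where Dλ(z) and D²λ(z) denote the first and second real Fréchet derivatives of λ at z. -/
open scoped RealInnerProductSpace

section AuxSTP

variable {E : Type*} [NormedAddCommGroup E] [InnerProductSpace ℝ E]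

/-- The real inner product, as a continuous-linear-map-valued continuous linear map. -/
private noncomputable def stpPsi : E →L[ℝ] E →L[ℝ] ℝ := innerSL ℝ

@[simp] private lemma stpPsi_apply (x y : E) : stpPsi x y = ⟪x, y⟫ := rfl

private lemma stp_hasFDerivAt_f (a : E) (b : ℝ) (z : E) :
    HasFDerivAt (fun z : E => b ^ 2 - ‖z - a‖ ^ 2) (-(2 • (stpPsi (z - a)))) z := by
  have h2 : HasFDerivAt (fun z : E => z - a) (ContinuousLinearMap.id ℝ E) z :=
    (hasFDerivAt_id z).sub_const a
  have h3 := h2.norm_sq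
  have h4 := h3.const_sub (b ^ 2)
  rw [ContinuousLinearMap.comp_id] at h4
  exact h4

private lemma stp_hasFDerivAt_l (a : E) (b : ℝ) (z : E) (hz : b ^ 2 - ‖z - a‖ ^ 2 ≠ 0) :
    HasFDerivAt (fun z : E => (b ^ 2 - ‖z - a‖ ^ 2)⁻¹)
      ((2 * ((b ^ 2 - ‖z - a‖ ^ 2)⁻¹) ^ 2) • stpPsi (z - a)) z := by
  have h5 := (hasDerivAt_inv hz).comp_hasFDerivAt z (stp_hasFDerivAt_f a b z)
  refine h5.congr_fderiv ?_
  ext w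
  simp only [ContinuousLinearMap.coe_smul', Pi.smul_apply, ContinuousLinearMap.neg_apply,
    smul_eq_mul, stpPsi_apply]
  field_simp
  rw [nsmul_eq_mul, Nat.cast_ofNat]

private lemma stp_hasFDerivAt_D (a : E) (b : ℝ) (z : E) (hz : b ^ 2 - ‖z - a‖ ^ 2 ≠ 0) :
    HasFDerivAt (fun z : E => (2 * ((b ^ 2 - ‖z - a‖ ^ 2)⁻¹) ^ 2) • stpPsi (z - a))
      ((2 * ((b ^ 2 - ‖z - a‖ ^ 2)⁻¹) ^ 2) • stpPsi +
        ((8 * ((b ^ 2 - ‖z - a‖ ^ 2)⁻¹) ^ 3) • stpPsi (z - a)).smulRight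
          (stpPsi (z - a))) z := by
  have hl := stp_hasFDerivAt_l a b z hz
  have hc : HasFDerivAt (fun z : E => 2 * ((b ^ 2 - ‖z - a‖ ^ 2)⁻¹) ^ 2)
      ((8 * ((b ^ 2 - ‖z - a‖ ^ 2)⁻¹) ^ 3) • stpPsi (z - a)) z := by
    have h := (hl.mul hl).const_mul 2
    refine (h.congr_fderiv ?_).congr_of_eventuallyEq (Filter.Eventually.of_forall fun y => ?_)
    · ext w
      simp only [ContinuousLinearMap.coe_smul', Pi.smul_apply, smul_eq_mul,
        ContinuousLinearMap.add_apply, stpPsi_apply]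
      field_simp
      ring
    · simp only [Pi.mul_apply]; ring
  have hg : HasFDerivAt (fun z : E => stpPsi (z - a)) stpPsi z := by
    have h := stpPsi.hasFDerivAt.comp z ((hasFDerivAt_id z).sub_const a)
    rw [ContinuousLinearMap.comp_id] at h
    exact h
  exact hc.smul hg

private lemma stp_key (a : E) (b : ℝ) (z : E) (hzb : ‖z - a‖ < b) :
    (∀ w : E, fderiv ℝ (fun z : E => (b ^ 2 - ‖z - a‖ ^ 2)⁻¹) z w =
      2 * ((b ^ 2 - ‖z - a‖ ^ 2)⁻¹) ^ 2 * ⟪z - a, w⟫) ∧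
    (∀ w : E, iteratedFDeriv ℝ 2 (fun z : E => (b ^ 2 - ‖z - a‖ ^ 2)⁻¹) z ![w, w] =
      8 * ((b ^ 2 - ‖z - a‖ ^ 2)⁻¹) ^ 3 * ⟪z - a, w⟫ ^ 2 +
        2 * ((b ^ 2 - ‖z - a‖ ^ 2)⁻¹) ^ 2 * ‖w‖ ^ 2) := by
  have hpos : ∀ y : E, ‖y - a‖ < b → 0 < b ^ 2 - ‖y - a‖ ^ 2 := by
    intro y hy
    have h : ‖y - a‖ ^ 2 < b ^ 2 := by
      apply pow_lt_pow_left₀ hy (norm_nonneg _)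
      norm_num
    linarith
  have hz : b ^ 2 - ‖z - a‖ ^ 2 ≠ 0 := (hpos z hzb).ne'
  have hopen : IsOpen {y : E | ‖y - a‖ < b} := by
    have h : {y : E | ‖y - a‖ < b} = Metric.ball a b := by
      ext y; simp [Metric.mem_ball, dist_eq_norm]
    rw [h]; exact Metric.isOpen_ball
  constructor
  · intro w
    rw [(stp_hasFDerivAt_l a b z hz).fderiv]
    simp only [ContinuousLinearMap.coe_smul', Pi.smul_apply, smul_eq_mul, stpPsi_apply]
  · intro w
    rw [iteratedFDeriv_two_apply]
    have hev : (fderiv ℝ (fun z : E => (b ^ 2 - ‖z - a‖ ^ 2)⁻¹)) =ᶠ[nhds z]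
        (fun z : E => (2 * ((b ^ 2 - ‖z - a‖ ^ 2)⁻¹) ^ 2) • stpPsi (z - a)) := by
      filter_upwards [hopen.mem_nhds hzb] with y hy
      exact (stp_hasFDerivAt_l a b y (hpos y hy).ne').fderiv
    rw [hev.fderiv_eq, (stp_hasFDerivAt_D a b z hz).fderiv]
    simp only [Matrix.cons_val_zero, Matrix.cons_val_one, Matrix.head_cons,
      ContinuousLinearMap.add_apply, ContinuousLinearMap.coe_smul', Pi.smul_apply,
      ContinuousLinearMap.smulRight_apply, smul_eq_mul, stpPsi_apply]
    rw [real_inner_self_eq_norm_sq]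
    ring

end AuxSTP

/-- Strong transversal pseudoconvexity of `λ(z) = (b² − ‖z − a‖²)⁻¹` on the ball
`{‖z − a‖ < b}` in `ℂⁿ`. -/
theorem ball_inverse_defining_function_strongly_transversally_pseudoconvex
    (n : ℕ) (hn : 1 ≤ n)
    (a : EuclideanSpace ℂ (Fin n)) (b : ℝ) (hb : 0 < b)
    (l : EuclideanSpace ℂ (Fin n) → ℝ)
    (hl : ∀ z, l z = (b ^ 2 - ‖z - a‖ ^ 2)⁻¹)
    (B : Set (EuclideanSpace ℂ (Fin n)))
    (hB : B = {z | ‖z - a‖ < b}) :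
    ContDiffOn ℝ (⊤ : ℕ∞) l B ∧
    ∀ z ∈ B, ∀ w : EuclideanSpace ℂ (Fin n), w ≠ 0 →
      0 < l z *
          (iteratedFDeriv ℝ 2 l z ![w, w] +
           iteratedFDeriv ℝ 2 l z ![Complex.I • w, Complex.I • w]) -
        2 * ((fderiv ℝ l z w)^2 + (fderiv ℝ l z (Complex.I • w))^2) := by
  have hfun : l = fun z => (b ^ 2 - ‖z - a‖ ^ 2)⁻¹ := funext hl
  subst hfun hB
  have hpos : ∀ y : EuclideanSpace ℂ (Fin n), ‖y - a‖ < b → 0 < b ^ 2 - ‖y - a‖ ^ 2 := by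
    intro y hy
    have h : ‖y - a‖ ^ 2 < b ^ 2 := by
      apply pow_lt_pow_left₀ hy (norm_nonneg _)
      norm_num
    linarith
  constructor
  · apply ContDiffOn.inv
    · exact (contDiff_const.sub ((contDiff_id.sub contDiff_const).norm_sq ℝ)).contDiffOn
    · intro z hz
      exact (hpos z hz).ne'
  · intro z hz w hw
    obtain ⟨hfd, hit⟩ := stp_key a b z hz
    set u : ℝ := (b ^ 2 - ‖z - a‖ ^ 2)⁻¹ with hu
    have hupos : 0 < u := inv_pos.mpr (hpos z hz)
    set p : ℝ := ⟪z - a, w⟫ with hp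
    set q : ℝ := ⟪z - a, Complex.I • w⟫ with hq
    have hnormI : ‖Complex.I • w‖ = ‖w‖ := by
      rw [norm_smul, Complex.norm_I, one_mul]
    rw [hit w, hit (Complex.I • w), hfd w, hfd (Complex.I • w), hnormI]
    have hl0 : (fun z : EuclideanSpace ℂ (Fin n) => (b ^ 2 - ‖z - a‖ ^ 2)⁻¹) z = u := rfl
    rw [hl0]
    have hwpos : 0 < ‖w‖ ^ 2 := by
      have : ‖w‖ ≠ 0 := norm_ne_zero_iff.mpr hw
      positivity
    have hkey : u * ((8 * u ^ 3 * p ^ 2 + 2 * u ^ 2 * ‖w‖ ^ 2) +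
        (8 * u ^ 3 * q ^ 2 + 2 * u ^ 2 * ‖w‖ ^ 2)) -
        2 * ((2 * u ^ 2 * p) ^ 2 + (2 * u ^ 2 * q) ^ 2) = 4 * u ^ 3 * ‖w‖ ^ 2 := by
      ring
    rw [hkey]
    exact mul_pos (by positivity) hwpos
end

section
/- Let n, N ≥ 1, let F : ℂⁿ → ℂ^N be holomorphic (ℂ-differentiable everywhere), let a ∈ ℂ^N and p ∈ ℂⁿ. Define q : ℂⁿ → ℝ by q(w) = γ_w''(0), where γ_w(s) = ‖F(p + s·w) − a‖² for s ∈ ℝ (the Hessian quadratic form of ‖F − a‖² at p). If W is a real-linear subspace of ℂⁿ on which q is negative definite (q(w) < 0 for all nonzero w ∈ W), then dim_ℝ W ≤ n. -/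
/-!
Restricted to a complex line `z ↦ p + z • v`, the map `F - a` becomes a holomorphic curve `G`, and
the second derivative of `s ↦ ‖G (s * c)‖²` at `0` is `2 ‖c • G'(0)‖² + 2 ⟪G(0), c² • G''(0)⟫`.
Replacing `c` by `I * c` flips the sign of the second term, so the Hessian `q` of `‖F - a‖²`
satisfies `q v + q (I • v) ≥ 0`. A real subspace `W` of `ℂⁿ` of real dimension `> n` meets `I • W`
nontrivially, i.e. contains some `v ≠ 0` together with `I • v`, so `q` cannot be negative definite
on `W`.
-/

open Complex
open scoped RealInnerProductSpace

theorem Submodule.exists_ne_zero_mem_and_I_smul_mem {V : Type*} [AddCommGroup V] [Module ℂ V]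
    [FiniteDimensional ℂ V] (W : Submodule ℝ V)
    (hW : Module.finrank ℂ V < Module.finrank ℝ W) : ∃ v ∈ W, v ≠ 0 ∧ I • v ∈ W := by
  have : FiniteDimensional ℝ V := .complexToReal V
  let J : V ≃ₗ[ℝ] V := (LinearEquiv.smulOfNeZero ℂ V I I_ne_zero).restrictScalars ℝ
  have hJW : Module.finrank ℝ (W.map (J : V →ₗ[ℝ] V)) = Module.finrank ℝ W :=
    LinearEquiv.finrank_map_eq J W
  have hnot : ¬ Disjoint (W.map (J : V →ₗ[ℝ] V)) W := fun h => by
    have := Submodule.finrank_add_finrank_le_of_disjoint h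
    rw [finrank_real_of_complex] at this
    omega
  rw [Submodule.disjoint_def] at hnot
  push Not at hnot
  obtain ⟨_, ⟨v, hv, rfl⟩, hIv, hIv0⟩ := hnot
  exact ⟨v, hv, fun h => hIv0 (by simp [h]), hIv⟩

section

variable {E : Type*} [NormedAddCommGroup E] [InnerProductSpace ℝ E] [NormedSpace ℂ E]
  [IsScalarTower ℝ ℂ E]

theorem HasDerivAt.comp_ofReal_mul {G : ℂ → E} {c : ℂ} {s : ℝ} {G' : E}
    (hG : HasDerivAt G G' (s * c)) : HasDerivAt (fun t : ℝ => G (t * c)) (c • G') s := by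
  have h : HasDerivAt (fun t : ℝ => (t : ℂ) * c) c s := by
    simpa using ((hasDerivAt_id (s : ℂ)).mul_const c).comp_ofReal
  exact hG.scomp s h

variable [CompleteSpace E]

theorem deriv_deriv_sq_norm_comp_ofReal_mul {G : ℂ → E} (hG : Differentiable ℂ G) (c : ℂ) :
    deriv (deriv fun s : ℝ => ‖G (s * c)‖ ^ 2) 0 =
      2 * ‖c • deriv G 0‖ ^ 2 + 2 * ⟪G 0, (c * c) • deriv (deriv G) 0⟫ := by
  have hG' : Differentiable ℂ (deriv G) := fun z => (hG.analyticAt z).deriv.differentiableAt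
  have hγ (s : ℝ) : HasDerivAt (fun t : ℝ => G (t * c)) (c • deriv G (s * c)) s :=
    (hG _).hasDerivAt.comp_ofReal_mul
  have hγ' : HasDerivAt (fun t : ℝ => c • deriv G (t * c)) ((c * c) • deriv (deriv G) 0) 0 := by
    have := ((hG' _).hasDerivAt.comp_ofReal_mul (c := c) (s := 0)).const_smul c
    rwa [ofReal_zero, zero_mul, ← mul_smul] at this
  have hfirst : deriv (fun s : ℝ => ‖G (s * c)‖ ^ 2) =
      fun s : ℝ => 2 * ⟪G (s * c), c • deriv G (s * c)⟫ := by
    funext s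
    simpa [real_inner_comm, two_mul] using (hγ s).norm_sq.deriv
  rw [hfirst, (((hγ 0).inner ℝ hγ').const_mul 2).deriv]
  simp only [ofReal_zero, zero_mul, real_inner_self_eq_norm_sq]
  ring

theorem deriv_deriv_sq_norm_comp_ofReal_mul_add_I_mul {G : ℂ → E} (hG : Differentiable ℂ G)
    (c : ℂ) :
    deriv (deriv fun s : ℝ => ‖G (s * c)‖ ^ 2) 0 +
        deriv (deriv fun s : ℝ => ‖G (s * (I * c))‖ ^ 2) 0 =
      4 * ‖c • deriv G 0‖ ^ 2 := by
  have hI : (I * c) * (I * c) = -(c * c) := by rw [mul_mul_mul_comm, I_mul_I, neg_one_mul]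
  rw [deriv_deriv_sq_norm_comp_ofReal_mul hG, deriv_deriv_sq_norm_comp_ofReal_mul hG, hI,
    neg_smul, inner_neg_right, mul_smul I c, norm_smul I, norm_I, one_mul]
  ring

theorem deriv_deriv_sq_norm_line_add_I_smul_nonneg {V : Type*} [NormedAddCommGroup V]
    [NormedSpace ℂ V] {H : V → E} (hH : Differentiable ℂ H) (p w : V) :
    0 ≤ deriv (deriv fun s : ℝ => ‖H (p + s • w)‖ ^ 2) 0 +
      deriv (deriv fun s : ℝ => ‖H (p + s • (I • w))‖ ^ 2) 0 := by
  let G : ℂ → E := fun z => H (p + z • w)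
  have hG : Differentiable ℂ G := hH.comp ((differentiable_id.smul_const w).const_add p)
  have hline (c : ℂ) : (fun s : ℝ => ‖H (p + s • c • w)‖ ^ 2) = fun s : ℝ => ‖G (s * c)‖ ^ 2 := by
    funext s
    simp only [G, mul_smul, coe_smul]
  have h := deriv_deriv_sq_norm_comp_ofReal_mul_add_I_mul hG 1
  rw [mul_one, ← hline, ← hline, one_smul] at h
  rw [h]
  positivity

end

theorem index_bound_sq_dist_of_holomorphic_general
    (n N : ℕ)
    (F : EuclideanSpace ℂ (Fin n) → EuclideanSpace ℂ (Fin N))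
    (hF : Differentiable ℂ F)
    (a : EuclideanSpace ℂ (Fin N))
    (p : EuclideanSpace ℂ (Fin n))
    (W : Submodule ℝ (EuclideanSpace ℂ (Fin n)))
    (hW : ∀ w ∈ W, w ≠ 0 →
      deriv (deriv (fun s : ℝ => ‖F (p + s • w) - a‖ ^ 2)) 0 < 0) :
    Module.finrank ℝ W ≤ n := by
  by_contra! hW_large
  obtain ⟨v, hv, hv0, hIv⟩ :=
    W.exists_ne_zero_mem_and_I_smul_mem (by rwa [finrank_euclideanSpace_fin])
  have := deriv_deriv_sq_norm_line_add_I_smul_nonneg (hF.sub_const a) p v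
  linarith [hW v hv hv0, hW _ hIv (smul_ne_zero I_ne_zero hv0)]

/-- Andreotti–Frankel type index bound: the Hessian quadratic form at `p` of
`‖F − a‖²`, for a holomorphic `F : ℂⁿ → ℂ^N`, is negative definite on real
subspaces of dimension at most `n` only. -/
theorem index_bound_sq_dist_of_holomorphic
    (n N : ℕ) (hn : 1 ≤ n) (hN : 1 ≤ N)
    (F : EuclideanSpace ℂ (Fin n) → EuclideanSpace ℂ (Fin N))
    (hF : Differentiable ℂ F)
    (a : EuclideanSpace ℂ (Fin N))
    (p : EuclideanSpace ℂ (Fin n))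
    (W : Submodule ℝ (EuclideanSpace ℂ (Fin n)))
    (hW : ∀ w ∈ W, w ≠ 0 →
      deriv (deriv (fun s : ℝ => ‖F (p + s • w) - a‖ ^ 2)) 0 < 0) :
    Module.finrank ℝ W ≤ n :=
  index_bound_sq_dist_of_holomorphic_general n N F hF a p W hW
end
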